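/- Let X be an A–B C*-correspondence, let K = K(X) be the compact operators on X (so X is a left-full K–B Hilbert bimodule), and let φ_A : A → L(X) = M(K) be the left-module homomorphism. Then for every ideal L of B, X-Ind_B^A L = φ_A*(X-Ind_B^K L), i.e., the ideal of A induced from L via the A–B correspondence X equals the pullback under φ_A of the ideal of K induced from L via the K–B bimodule X. -/
import Mathlib


open scoped MultiplierAlgebra

noncomputable section

/-- A C*-correspondence from `A` to `B` with underlying Banach space `X`:
a right Hilbert `B`-module with a left action of `A` by adjointable operators. -/
structure CStarCorr (A B X : Type*) [NonUnitalCStarAlgebra A] [NonUnitalCStarAlgebra B]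
    [NormedAddCommGroup X] [NormedSpace ℂ X] [CompleteSpace X] : Type _ where
  lsmul : A → X → X
  rsmul : X → B → X
  inner : X → X → B
  add_rsmul : ∀ (x y : X) (b : B), rsmul (x + y) b = rsmul x b + rsmul y b
  rsmul_add : ∀ (x : X) (b c : B), rsmul x (b + c) = rsmul x b + rsmul x c
  rsmul_mul : ∀ (x : X) (b c : B), rsmul (rsmul x b) c = rsmul x (b * c)
  smul_rsmul : ∀ (z : ℂ) (x : X) (b : B), rsmul (z • x) b = z • rsmul x b
  rsmul_smul : ∀ (z : ℂ) (x : X) (b : B), rsmul x (z • b) = z • rsmul x b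
  inner_add_right : ∀ (x y z : X), inner x (y + z) = inner x y + inner x z
  inner_smul_right : ∀ (z : ℂ) (x y : X), inner x (z • y) = z • inner x y
  inner_rsmul_right : ∀ (x y : X) (b : B), inner x (rsmul y b) = inner x y * b
  star_inner : ∀ (x y : X), star (inner x y) = inner y x
  norm_inner_self : ∀ x : X, ‖inner x x‖ = ‖x‖ ^ 2
  lsmul_add : ∀ (a : A) (x y : X), lsmul a (x + y) = lsmul a x + lsmul a y
  add_lsmul : ∀ (a b : A) (x : X), lsmul (a + b) x = lsmul a x + lsmul b x
  mul_lsmul : ∀ (a b : A) (x : X), lsmul (a * b) x = lsmul a (lsmul b x)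
  smul_lsmul : ∀ (z : ℂ) (a : A) (x : X), lsmul (z • a) x = z • lsmul a x
  lsmul_smul : ∀ (z : ℂ) (a : A) (x : X), lsmul a (z • x) = z • lsmul a x
  lsmul_rsmul : ∀ (a : A) (x : X) (b : B), lsmul a (rsmul x b) = rsmul (lsmul a x) b
  inner_lsmul_left : ∀ (a : A) (x y : X), inner (lsmul a x) y = inner x (lsmul (star a) y)

namespace CStarCorr

variable {A B X : Type*} [NonUnitalCStarAlgebra A] [NonUnitalCStarAlgebra B]
    [NormedAddCommGroup X] [NormedSpace ℂ X] [CompleteSpace X]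

/-- `X·S`: the closed submodule of `X` generated by right multiplication by `S ⊆ B`. -/
def smulIdeal (c : CStarCorr A B X) (S : Set B) : Set X :=
  closure (Submodule.span ℂ {z : X | ∃ x b, b ∈ S ∧ z = c.rsmul x b} : Set X)

/-- The ideal of `A` induced from `S ⊆ B` via `X`:  `X-Ind S = {a | a·X ⊆ X·S}`. -/
def ind (c : CStarCorr A B X) (S : Set B) : Set A :=
  {a : A | ∀ x : X, c.lsmul a x ∈ c.smulIdeal S}

end CStarCorr

/-- An `A`–`B` Hilbert bimodule: a C*-correspondence with a compatible left `A`-valued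
inner product. -/
structure CStarBimod (A B X : Type*) [NonUnitalCStarAlgebra A] [NonUnitalCStarAlgebra B]
    [NormedAddCommGroup X] [NormedSpace ℂ X] [CompleteSpace X]
    extends CStarCorr A B X where
  linner : X → X → A
  linner_add_left : ∀ (x y z : X), linner (x + y) z = linner x z + linner y z
  linner_smul_left : ∀ (z : ℂ) (x y : X), linner (z • x) y = z • linner x y
  star_linner : ∀ (x y : X), star (linner x y) = linner y x
  linner_lsmul_left : ∀ (a : A) (x y : X), linner (lsmul a x) y = a * linner x y
  imprim : ∀ (x y z : X), lsmul (linner x y) z = rsmul x (inner y z)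

/-- Left-fullness of a Hilbert bimodule: the left inner products span a dense
subspace of `A`. -/
def CStarBimod.LeftFull {A B X : Type*} [NonUnitalCStarAlgebra A] [NonUnitalCStarAlgebra B]
    [NormedAddCommGroup X] [NormedSpace ℂ X] [CompleteSpace X] (c : CStarBimod A B X) : Prop :=
  closure (Submodule.span ℂ {a : A | ∃ x y, a = c.linner x y} : Set A) = Set.univ

/-- Right-fullness: the `B`-valued inner products span a dense subspace of `B`. -/
def CStarBimod.RightFull {A B X : Type*} [NonUnitalCStarAlgebra A] [NonUnitalCStarAlgebra B]
    [NormedAddCommGroup X] [NormedSpace ℂ X] [CompleteSpace X] (c : CStarBimod A B X) : Prop :=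
  closure (Submodule.span ℂ {b : B | ∃ x y, b = c.inner x y} : Set B) = Set.univ

end

noncomputable section
namespace CStarCorr
variable {A B X : Type*} [NonUnitalCStarAlgebra A] [NonUnitalCStarAlgebra B]
    [NormedAddCommGroup X] [NormedSpace ℂ X] [CompleteSpace X] (c : CStarCorr A B X)

lemma inner_add_left' (x y z : X) : c.inner (x + y) z = c.inner x z + c.inner y z := by
  have := congrArg star (c.inner_add_right z x y)
  rwa [star_add, c.star_inner, c.star_inner, c.star_inner] at this

lemma inner_smul_left' (z : ℂ) (x y : X) :
    c.inner (z • x) y = (starRingEnd ℂ z) • c.inner x y := by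
  have := congrArg star (c.inner_smul_right z y x)
  rw [c.star_inner] at this
  rw [this, star_smul, c.star_inner]
  rfl

lemma inner_zero_right' (x : X) : c.inner x 0 = 0 := by
  have := c.inner_smul_right 0 x 0
  simpa using this

lemma inner_zero_left' (x : X) : c.inner 0 x = 0 := by
  have := congrArg star (c.inner_zero_right' x)
  rwa [c.star_inner, star_zero] at this

lemma polar (x y : X) : c.inner x y = (4 : ℂ)⁻¹ •
    (c.inner (x + y) (x + y)
      + (-Complex.I) • c.inner (x + Complex.I • y) (x + Complex.I • y)
      + (-1 : ℂ) • c.inner (x + (-1 : ℂ) • y) (x + (-1 : ℂ) • y)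
      + Complex.I • c.inner (x + (-Complex.I) • y) (x + (-Complex.I) • y)) := by
  simp only [c.inner_add_right, c.inner_add_left', c.inner_smul_right, c.inner_smul_left',
    smul_add, smul_smul, map_neg, Complex.conj_I, map_one]
  ring_nf
  simp [Complex.I_sq, smul_smul, smul_add]
  module

lemma norm_inner_le_sq (x y : X) : ‖c.inner x y‖ ≤ (‖x‖ + ‖y‖) ^ 2 := by
  have hP : ∀ z : ℂ, ‖z‖ = 1 → ‖c.inner (x + z • y) (x + z • y)‖ ≤ (‖x‖ + ‖y‖) ^ 2 := by
    intro z hz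
    rw [c.norm_inner_self]
    have : ‖x + z • y‖ ≤ ‖x‖ + ‖y‖ := by
      calc ‖x + z • y‖ ≤ ‖x‖ + ‖z • y‖ := norm_add_le _ _
        _ = ‖x‖ + ‖y‖ := by rw [norm_smul, hz, one_mul]
    exact pow_le_pow_left₀ (norm_nonneg _) this 2
  rw [c.polar x y, norm_smul]
  have h1 := hP 1 (by simp)
  have h2 := hP Complex.I (by simp)
  have h3 := hP (-1 : ℂ) (by simp)
  have h4 := hP (-Complex.I) (by simp)
  rw [one_smul] at h1
  have hb : ‖c.inner (x + y) (x + y)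
      + (-Complex.I) • c.inner (x + Complex.I • y) (x + Complex.I • y)
      + (-1 : ℂ) • c.inner (x + (-1 : ℂ) • y) (x + (-1 : ℂ) • y)
      + Complex.I • c.inner (x + (-Complex.I) • y) (x + (-Complex.I) • y)‖
      ≤ 4 * (‖x‖ + ‖y‖) ^ 2 := by
    calc _ ≤ ‖c.inner (x + y) (x + y)
        + (-Complex.I) • c.inner (x + Complex.I • y) (x + Complex.I • y)
        + (-1 : ℂ) • c.inner (x + (-1 : ℂ) • y) (x + (-1 : ℂ) • y)‖
        + ‖Complex.I • c.inner (x + (-Complex.I) • y) (x + (-Complex.I) • y)‖ := norm_add_le _ _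
      _ ≤ (‖c.inner (x + y) (x + y)
        + (-Complex.I) • c.inner (x + Complex.I • y) (x + Complex.I • y)‖
        + ‖(-1 : ℂ) • c.inner (x + (-1 : ℂ) • y) (x + (-1 : ℂ) • y)‖)
        + ‖Complex.I • c.inner (x + (-Complex.I) • y) (x + (-Complex.I) • y)‖ := by
          gcongr; exact norm_add_le _ _
      _ ≤ ((‖c.inner (x + y) (x + y)‖
        + ‖(-Complex.I) • c.inner (x + Complex.I • y) (x + Complex.I • y)‖)
        + ‖(-1 : ℂ) • c.inner (x + (-1 : ℂ) • y) (x + (-1 : ℂ) • y)‖)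
        + ‖Complex.I • c.inner (x + (-Complex.I) • y) (x + (-Complex.I) • y)‖ := by
          gcongr; exact norm_add_le _ _
      _ ≤ 4 * (‖x‖ + ‖y‖) ^ 2 := by
          simp only [norm_smul, norm_neg, Complex.norm_I, norm_one, one_mul]
          linarith
  calc ‖(4:ℂ)⁻¹‖ * _ ≤ ‖(4:ℂ)⁻¹‖ * (4 * (‖x‖ + ‖y‖)^2) := by gcongr
    _ = (‖x‖ + ‖y‖) ^ 2 := by
        norm_num
        ring

lemma norm_inner_le (x y : X) : ‖c.inner x y‖ ≤ 4 * ‖x‖ * ‖y‖ := by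
  rcases eq_or_ne x 0 with rfl | hx
  · simp [c.inner_zero_left']
  rcases eq_or_ne y 0 with rfl | hy
  · simp [c.inner_zero_right']
  have hx' : (0:ℝ) < ‖x‖ := norm_pos_iff.mpr hx
  have hy' : (0:ℝ) < ‖y‖ := norm_pos_iff.mpr hy
  set t : ℝ := Real.sqrt (‖y‖ / ‖x‖) with ht
  have htpos : 0 < t := Real.sqrt_pos.mpr (div_pos hy' hx')
  have key : c.inner x y = c.inner ((t:ℂ) • x) (((t⁻¹ : ℝ):ℂ) • y) := by
    rw [c.inner_smul_left', c.inner_smul_right, smul_smul]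
    have : (starRingEnd ℂ (t:ℂ)) * ((t⁻¹:ℝ):ℂ) = 1 := by
      rw [Complex.conj_ofReal]
      push_cast
      rw [mul_inv_cancel₀]
      exact_mod_cast htpos.ne'
    rw [this, one_smul]
  rw [key]
  calc ‖c.inner ((t:ℂ) • x) (((t⁻¹ : ℝ):ℂ) • y)‖
      ≤ (‖(t:ℂ) • x‖ + ‖((t⁻¹ : ℝ):ℂ) • y‖) ^ 2 := c.norm_inner_le_sq _ _
    _ = (t * ‖x‖ + t⁻¹ * ‖y‖) ^ 2 := by
        rw [norm_smul, norm_smul]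
        simp [abs_of_pos htpos, abs_of_pos (inv_pos.mpr htpos)]
    _ ≤ 4 * ‖x‖ * ‖y‖ := by
        have ht2 : t ^ 2 = ‖y‖ / ‖x‖ := Real.sq_sqrt (by positivity)
        have ha : t ^ 2 * ‖x‖ = ‖y‖ := by rw [ht2]; field_simp
        have hc : t * t⁻¹ = 1 := mul_inv_cancel₀ htpos.ne'
        have hb : (t⁻¹) ^ 2 * ‖y‖ = ‖x‖ := by
          have : (t⁻¹) ^ 2 = ‖x‖ / ‖y‖ := by
            rw [← one_div, div_pow, one_pow, ht2]
            field_simp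
          rw [this]; field_simp
        nlinarith [ha, hb, hc, sq_nonneg (t * ‖x‖ - t⁻¹ * ‖y‖)]

lemma inner_sub_right' (x y z : X) : c.inner x (y - z) = c.inner x y - c.inner x z := by
  have : y - z = y + (-1 : ℂ) • z := by simp [sub_eq_add_neg]
  rw [this, c.inner_add_right, c.inner_smul_right]
  simp [sub_eq_add_neg]

open Filter Topology in
lemma tendsto_inner_right' (z : X) {u : ℕ → X} {x : X} (h : Tendsto u atTop (𝓝 x)) :
    Tendsto (fun n => c.inner z (u n)) atTop (𝓝 (c.inner z x)) := by
  rw [tendsto_iff_norm_sub_tendsto_zero]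
  have hb : ∀ n, ‖c.inner z (u n) - c.inner z x‖ ≤ 4 * ‖z‖ * ‖u n - x‖ := by
    intro n
    rw [← c.inner_sub_right']
    exact c.norm_inner_le _ _
  have h0 : Tendsto (fun n => 4 * ‖z‖ * ‖u n - x‖) atTop (𝓝 0) := by
    have := (tendsto_iff_norm_sub_tendsto_zero.mp h)
    simpa using this.const_mul (4 * ‖z‖)
  exact squeeze_zero (fun n => norm_nonneg _) hb h0

/-- The linear map given by the left action of `a`. -/
def lsmulLM (a : A) : X →ₗ[ℂ] X where
  toFun := c.lsmul a
  map_add' := c.lsmul_add a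
  map_smul' := fun z x => c.lsmul_smul z a x

open Filter Topology in
lemma continuous_lsmul (a : A) : Continuous (c.lsmul a) := by
  have : Continuous (c.lsmulLM a) := by
    apply LinearMap.continuous_of_seq_closed_graph
    intro u x y hu hy
    have key : ∀ z : X, c.inner z y = c.inner z (c.lsmul a x) := by
      intro z
      have e1 : Tendsto (fun n => c.inner z (c.lsmul a (u n))) atTop (𝓝 (c.inner z y)) :=
        c.tendsto_inner_right' z hy
      have flip : ∀ w : X, c.inner z (c.lsmul a w) = c.inner (c.lsmul (star a) z) w := by
        intro w
        rw [← c.star_inner, c.inner_lsmul_left, c.star_inner]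
      have e2 : Tendsto (fun n => c.inner z (c.lsmul a (u n))) atTop
          (𝓝 (c.inner (c.lsmul (star a) z) x)) := by
        simp only [flip]
        exact c.tendsto_inner_right' _ hu
      rw [flip]
      exact tendsto_nhds_unique e1 e2
    have hz : c.inner (y - c.lsmul a x) (y - c.lsmul a x) = 0 := by
      rw [c.inner_sub_right', key, sub_self]
    have : ‖y - c.lsmul a x‖ ^ 2 = 0 := by rw [← c.norm_inner_self, hz, norm_zero]
    have : y - c.lsmul a x = 0 := by
      rwa [pow_eq_zero_iff (by norm_num), norm_eq_zero] at this
    exact sub_eq_zero.mp this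
  exact this

end CStarCorr
end

noncomputable section

/-- KLQ "Coaction functors, II": let `X` be an `A`–`B` correspondence, `K = K(X)` the
compact operators (modeled as a C*-algebra `K` acting on `X`, left-full via the
rank-one operators `linner`, nondegenerately, sharing the right module structure with
the `A`–`B` correspondence), and `φ : A → M(K) = L(X)` the left-module homomorphism
(so `a·(k·x) = (φ(a)k)·x`).  Then for every closed ideal `L` of `B`:
`X-Ind_B^A L = φ*(X-Ind_B^K L)`. -/
theorem ind_factors_through_compacts {A B K X : Type*}
    [NonUnitalCStarAlgebra A] [NonUnitalCStarAlgebra B] [NonUnitalCStarAlgebra K]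
    [NormedAddCommGroup X] [NormedSpace ℂ X] [CompleteSpace X]
    (cA : CStarCorr A B X) (cK : CStarCorr K B X)
    (hrs : cA.rsmul = cK.rsmul) (hin : cA.inner = cK.inner)
    (linner : X → X → K)
    (hrankone : ∀ x y z : X, cK.lsmul (linner x y) z = cK.rsmul x (cK.inner y z))
    (hfull : closure (Submodule.span ℂ {k : K | ∃ x y, k = linner x y} : Set K)
      = Set.univ)
    (hnondeg : closure (Submodule.span ℂ
      {z : X | ∃ (k : K) (x : X), z = cK.lsmul k x} : Set X) = Set.univ)
    (φ : A →⋆ₙₐ[ℂ] 𝓜(ℂ, K))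
    (hφ : ∀ (a : A) (k : K) (x : X), cA.lsmul a (cK.lsmul k x) = cK.lsmul ((φ a).fst k) x)
    (L : TwoSidedIdeal B) (hL : IsClosed (L : Set B)) :
    cA.ind (L : Set B) = {a : A | ∀ k : K, (φ a).fst k ∈ cK.ind (L : Set B)} := by
  have hsm : cA.smulIdeal (L : Set B) = cK.smulIdeal (L : Set B) := by
    simp only [CStarCorr.smulIdeal, hrs]
  ext a
  simp only [Set.mem_setOf_eq, CStarCorr.ind]
  constructor
  · intro ha k x
    rw [← hsm, ← hφ]
    exact ha _
  · intro ha x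
    rw [hsm]
    set M : Submodule ℂ X := (Submodule.span ℂ
      {z : X | ∃ x b, b ∈ (L : Set B) ∧ z = cK.rsmul x b}).topologicalClosure with hMdef
    have hMc : (M : Set X) = cK.smulIdeal (L : Set B) :=
      Submodule.topologicalClosure_coe _
    have hclosed : IsClosed ((Submodule.comap (cA.lsmulLM a) M : Submodule ℂ X) : Set X) := by
      have : ((Submodule.comap (cA.lsmulLM a) M : Submodule ℂ X) : Set X)
          = (cA.lsmul a) ⁻¹' (M : Set X) := rfl
      rw [this]
      exact (Submodule.isClosed_topologicalClosure _).preimage (cA.continuous_lsmul a)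
    have hsub : Submodule.span ℂ {z : X | ∃ (k : K) (x : X), z = cK.lsmul k x}
        ≤ Submodule.comap (cA.lsmulLM a) M := by
      rw [Submodule.span_le]
      rintro z ⟨k, w, rfl⟩
      have hmem : cA.lsmul a (cK.lsmul k w) ∈ (M : Set X) := by
        rw [hφ, hMc]
        exact ha k w
      exact hmem
    have hx : x ∈ closure (Submodule.span ℂ
        {z : X | ∃ (k : K) (x : X), z = cK.lsmul k x} : Set X) := by
      rw [hnondeg]; trivial
    have hfinal : closure ((Submodule.span ℂ
        {z : X | ∃ (k : K) (x : X), z = cK.lsmul k x}) : Set X)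
        ⊆ ((Submodule.comap (cA.lsmulLM a) M : Submodule ℂ X) : Set X) :=
      closure_minimal hsub hclosed
    have hmem := hfinal hx
    rw [← hMc]
    exact hmem


end
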